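/- Let μ, ν ∈ ℝ with μ + ν > −1 and μ − ν a nonnegative integer. If μ − ν is even, then ∫₀^∞ w_{μ,ν}(x) ( x − ((μ+1)² − ν²) ) dx = 0; if μ − ν is odd, then ∫₀^∞ w_{μ,ν}(x) ( x − ((μ+2)² − ν²) ) dx = 0. Equivalently, the monic degree-one orthogonal polynomial for w_{μ,ν} is φ₁(x) = x − (μ+1)² + ν² when μ − ν is even and φ₁(x) = x − (μ+2)² + ν² when μ − ν is odd. -/

import Mathlib

/-! Substituting `x = t²` turns `∫₀^∞ w_{μ,ν}(x) (x - c) dx` into `∫₀^∞ t^κ K_ν(t) (t² - c) dt`,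
with `κ = μ` for even and `κ = μ + 1` for odd `μ - ν`. Inserting the integral representation of
`K_ν` and integrating first in `t` gives `∫₀^∞ t^a K_ν(t) dt = Γ(a + 1) C_ν(a + 1)`, where
`C_ν(s) = ∫₀^∞ cosh(νu) cosh(u)^{-s} du`, and an integration by parts gives
`s (s + 1) C_ν(s + 2) = (s² - ν²) C_ν(s)`. Hence the moment of order `κ + 2` is
`(κ + 1)² - ν²` times the moment of order `κ`, which is exactly the claim. -/

open MeasureTheory Filter Set Polynomial
open scoped Classical

noncomputable section

/-- The Abel limit of `∫₀^∞ g(x) dx` is `L`: for every `s > 0` the integral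
`∫₀^∞ e^{-s x} g(x) dx` converges and these integrals tend to `L` as `s → 0⁺`. -/
def HasAbelLimit (g : ℝ → ℂ) (L : ℂ) : Prop :=
  (∀ s : ℝ, 0 < s →
    IntegrableOn (fun x : ℝ => Complex.exp (-(s : ℂ) * (x : ℂ)) * g x) (Set.Ioi 0)) ∧
  Tendsto (fun s : ℝ => ∫ x in Set.Ioi (0:ℝ), Complex.exp (-(s : ℂ) * (x : ℂ)) * g x)
    (nhdsWithin 0 (Set.Ioi 0)) (nhds L)

/-- Bessel function of the first kind of order `ν`, for `x > 0`, with the convention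
`1/Γ(z) = 0` at nonpositive integers `z` (automatic since `Real.Gamma` vanishes there). -/
def besselJ (ν x : ℝ) : ℝ :=
  ∑' k : ℕ, ((-1 : ℝ) ^ k / ((k.factorial : ℝ) * Real.Gamma (ν + k + 1))) *
    (x / 2) ^ (ν + 2 * (k : ℝ))

/-- Modified Bessel function of the second kind of order `ν`, for `x > 0`. -/
def besselK (ν x : ℝ) : ℝ :=
  ∫ t in Set.Ioi (0:ℝ), Real.exp (-x * Real.cosh t) * Real.cosh (ν * t)

/-- The weight function `w_{μ,ν}` on `(0,∞)`. -/
def weightW (μ ν : ℝ) (x : ℝ) : ℝ :=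
  if ∃ m : ℤ, μ - ν = 2 * m then (1/2) * x ^ ((μ - 1)/2) * besselK ν (Real.sqrt x)
  else (1/2) * x ^ (μ/2) * besselK ν (Real.sqrt x)

/-- `0 < x_1 < ⋯ < x_n` together with positive weights `w_1, …, w_n` form an `n`-point
Gaussian quadrature rule for `w_{μ,ν}`. -/
def IsGaussRule (μ ν : ℝ) (n : ℕ) (xs ws : Fin n → ℝ) : Prop :=
  StrictMono xs ∧ (∀ j, 0 < xs j) ∧ (∀ j, 0 < ws j) ∧
  ∀ p : Polynomial ℝ, p.natDegree ≤ 2 * n - 1 →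
    ∑ j, ws j * p.eval (xs j) = ∫ x in Set.Ioi (0:ℝ), weightW μ ν x * p.eval x

/-- `κ = μ` if `μ - ν` is even and `κ = μ + 1` if `μ - ν` is odd. -/
def kappaQ (μ ν : ℕ) : ℝ := if Even (μ - ν) then (μ : ℝ) else (μ : ℝ) + 1

/-- The boundary weights `ŵ_k⁰` of the generalized Gauss–Radau rule. -/
def wHat0 (μ ν : ℕ) {n : ℕ} (xs ws : Fin n → ℝ) (k : ℕ) : ℝ :=
  (1 / (k.factorial : ℝ)) *
    (2 ^ k * Real.Gamma (((ν : ℝ) + k + 1)/2) / Real.Gamma (((ν : ℝ) - k + 1)/2)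
      - (2 / Real.pi) * Real.cos (((k : ℝ) - ν) * Real.pi / 2) *
          ∑ j, ws j * (xs j) ^ (((k : ℝ) - kappaQ μ ν)/2))

/-- The generalized Gauss–Radau rule `(Q_{2n,μ} f)(ω)`. -/
def QRule (μ ν : ℕ) {n : ℕ} (xs ws : Fin n → ℝ) (f : ℂ → ℂ) (ω : ℝ) : ℂ :=
  (1 / (ω : ℂ)) *
    ((∑ k ∈ Finset.range μ, (wHat0 μ ν xs ws k : ℂ) / (ω : ℂ) ^ k * iteratedDeriv k f 0)
      + ∑ j, ((ws j * (xs j) ^ (-(kappaQ μ ν)/2) / Real.pi : ℝ) : ℂ) *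
          (Complex.exp (-(ν : ℂ) * (Real.pi : ℂ) * Complex.I / 2) *
              f (Complex.I * (Real.sqrt (xs j) : ℂ) / (ω : ℂ))
            + Complex.exp ((ν : ℂ) * (Real.pi : ℂ) * Complex.I / 2) *
              f (-Complex.I * (Real.sqrt (xs j) : ℂ) / (ω : ℂ))))

/-- `P` is a monic polynomial of degree `m` orthogonal with respect to `x^μ J_ν(x)`
on `(0,∞)`, all integrals taken in the Abel-limit sense. -/
def MonicOrthoBessel (μ ν : ℝ) (m : ℕ) (P : Polynomial ℂ) : Prop :=
  P.Monic ∧ P.natDegree = m ∧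
  ∀ k < m, HasAbelLimit
    (fun x : ℝ => P.eval (x : ℂ) * ((x ^ ((k : ℝ) + μ) : ℝ) : ℂ) * (besselJ ν x : ℂ)) 0

/-- `φ` is the monic real polynomial of degree `m` orthogonal to all lower powers
with respect to the weight `w_{μ,ν}` on `(0,∞)`. -/
def IsMonicOrthoW (μ ν : ℝ) (m : ℕ) (φ : Polynomial ℝ) : Prop :=
  φ.Monic ∧ φ.natDegree = m ∧
  ∀ k < m, ∫ x in Set.Ioi (0:ℝ), weightW μ ν x * φ.eval x * x ^ k = 0

open Real

lemma cosh_le_exp_abs (x : ℝ) : cosh x ≤ exp |x| := by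
  rw [← cosh_abs, cosh_eq]
  linarith [exp_le_exp.2 (show -|x| ≤ |x| by linarith [abs_nonneg x])]

lemma exp_le_two_mul_cosh (x : ℝ) : exp x ≤ 2 * cosh x := by
  rw [cosh_eq]; linarith [exp_pos (-x)]

lemma abs_sinh_le_cosh (x : ℝ) : |sinh x| ≤ cosh x := by
  rw [abs_sinh, ← cosh_abs]; exact (sinh_lt_cosh _).le

lemma cosh_mul_mul_cosh_rpow_neg_le {ν s u : ℝ} (hs : 0 ≤ s) (hu : 0 ≤ u) :
    cosh (ν * u) * cosh u ^ (-s) ≤ 2 ^ s * exp ((|ν| - s) * u) := by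
  have hν : cosh (ν * u) ≤ exp (|ν| * u) := by
    simpa only [abs_mul, abs_of_nonneg hu] using cosh_le_exp_abs (ν * u)
  have hpow : cosh u ^ (-s) ≤ (exp u / 2) ^ (-s) :=
    rpow_le_rpow_of_nonpos (by positivity) (by linarith [exp_le_two_mul_cosh u]) (by linarith)
  calc cosh (ν * u) * cosh u ^ (-s) ≤ exp (|ν| * u) * (exp u / 2) ^ (-s) :=
        mul_le_mul hν hpow (by positivity) (by positivity)
    _ = 2 ^ s * exp ((|ν| - s) * u) := by
        rw [div_rpow (exp_pos u).le zero_le_two, rpow_neg zero_le_two, ← exp_mul, div_inv_eq_mul,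
          show (|ν| - s) * u = |ν| * u + u * -s by ring, exp_add]
        ring

lemma continuous_cosh_mul_mul_cosh_rpow_neg (ν s : ℝ) :
    Continuous fun u => cosh (ν * u) * cosh u ^ (-s) := by
  have := continuous_cosh.rpow_const (p := -s) fun u => Or.inl (cosh_pos u).ne'
  fun_prop

lemma integrableOn_cosh_mul_mul_cosh_rpow_neg {ν s : ℝ} (h : |ν| < s) :
    IntegrableOn (fun u => cosh (ν * u) * cosh u ^ (-s)) (Ioi 0) := by
  have hs : 0 ≤ s := (abs_nonneg ν).trans h.le
  refine ((exp_neg_integrableOn_Ioi 0 (sub_pos.2 h)).const_mul (2 ^ s)).mono'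
    (continuous_cosh_mul_mul_cosh_rpow_neg ν s).aestronglyMeasurable ?_
  filter_upwards [ae_restrict_mem measurableSet_Ioi] with u hu
  rw [norm_of_nonneg (by positivity), neg_sub]
  exact cosh_mul_mul_cosh_rpow_neg_le hs (le_of_lt hu)

def coshMoment (ν s : ℝ) : ℝ :=
  ∫ u in Ioi 0, cosh (ν * u) * cosh u ^ (-s)

lemma hasDerivAt_coshMoment_primitive (ν s u : ℝ) :
    HasDerivAt
      (fun u => (s * cosh (ν * u) * sinh u + ν * sinh (ν * u) * cosh u) * cosh u ^ (-(s + 1)))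
      ((ν ^ 2 - s ^ 2) * (cosh (ν * u) * cosh u ^ (-s))
        + s * (s + 1) * (cosh (ν * u) * cosh u ^ (-(s + 2)))) u := by
  have hc : 0 < cosh u := cosh_pos u
  have hνu : HasDerivAt (fun u => ν * u) ν u := by simpa using (hasDerivAt_id u).const_mul ν
  have hpow : HasDerivAt (fun u => cosh u ^ (-(s + 1)))
      (sinh u * (-(s + 1)) * cosh u ^ (-(s + 1) - 1)) u :=
    (hasDerivAt_cosh u).rpow_const (Or.inl hc.ne')
  refine ((((hνu.cosh.const_mul s).mul (hasDerivAt_sinh u)).add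
    ((hνu.sinh.const_mul ν).mul (hasDerivAt_cosh u))).mul hpow).congr_deriv ?_
  have e₀ : cosh u ^ (-s) = cosh u ^ (-(s + 2)) * cosh u * cosh u := by
    rw [← rpow_add_one hc.ne', ← rpow_add_one hc.ne']; ring_nf
  have e₁ : cosh u ^ (-(s + 1)) = cosh u ^ (-(s + 2)) * cosh u := by
    rw [← rpow_add_one hc.ne']; ring_nf
  have e₂ : cosh u ^ (-(s + 1) - 1) = cosh u ^ (-(s + 2)) := by ring_nf
  simp only [Pi.add_apply, Pi.mul_apply]
  rw [e₀, e₁, e₂]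
  linear_combination (-(s * (s + 1)) * cosh (ν * u) * cosh u ^ (-(s + 2))) * sinh_sq u

lemma abs_coshMoment_primitive_le {s : ℝ} (hs : 0 ≤ s) (ν u : ℝ) :
    |(s * cosh (ν * u) * sinh u + ν * sinh (ν * u) * cosh u) * cosh u ^ (-(s + 1))|
      ≤ (s + |ν|) * (cosh (ν * u) * cosh u ^ (-s)) := by
  have hc : 0 < cosh u := cosh_pos u
  have hA : |s * cosh (ν * u) * sinh u + ν * sinh (ν * u) * cosh u|
      ≤ (s + |ν|) * cosh (ν * u) * cosh u :=
    calc _ ≤ s * cosh (ν * u) * |sinh u| + |ν| * |sinh (ν * u)| * cosh u := by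
          refine (abs_add_le _ _).trans_eq ?_
          rw [abs_mul, abs_mul, abs_mul, abs_mul, abs_of_nonneg hs, abs_of_pos (cosh_pos _),
            abs_of_pos hc]
      _ ≤ s * cosh (ν * u) * cosh u + |ν| * cosh (ν * u) * cosh u := by
          gcongr <;> exact abs_sinh_le_cosh _
      _ = _ := by ring
  calc _ = |s * cosh (ν * u) * sinh u + ν * sinh (ν * u) * cosh u| * cosh u ^ (-(s + 1)) := by
        rw [abs_mul, abs_of_pos (rpow_pos_of_pos hc _)]
    _ ≤ (s + |ν|) * cosh (ν * u) * cosh u * cosh u ^ (-(s + 1)) := by gcongr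
    _ = (s + |ν|) * (cosh (ν * u) * (cosh u ^ (-(s + 1)) * cosh u)) := by ring
    _ = _ := by rw [← rpow_add_one hc.ne']; ring_nf

lemma coshMoment_add_two {ν s : ℝ} (h : |ν| < s) :
    s * (s + 1) * coshMoment ν (s + 2) = (s ^ 2 - ν ^ 2) * coshMoment ν s := by
  have hs : 0 ≤ s := (abs_nonneg ν).trans h.le
  have hI₀ := integrableOn_cosh_mul_mul_cosh_rpow_neg h
  have hI₂ := integrableOn_cosh_mul_mul_cosh_rpow_neg (ν := ν) (s := s + 2) (by linarith)
  have hderiv := hasDerivAt_coshMoment_primitive ν s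
  have hprimitive : IntegrableOn
      (fun u => (s * cosh (ν * u) * sinh u + ν * sinh (ν * u) * cosh u) * cosh u ^ (-(s + 1)))
      (Ioi 0) :=
    (hI₀.const_mul (s + |ν|)).mono'
      (continuous_iff_continuousAt.2 fun u => (hderiv u).continuousAt).aestronglyMeasurable
      (Eventually.of_forall fun u => abs_coshMoment_primitive_le hs ν u)
  have hderiv_int := (hI₀.const_mul (ν ^ 2 - s ^ 2)).add (hI₂.const_mul (s * (s + 1)))
  -- The primitive vanishes at `0`, and at `∞` because it is integrable with integrable derivative.
  have hFTC := integral_Ioi_of_hasDerivAt_of_tendsto' (fun u _ => hderiv u) hderiv_int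
    (tendsto_zero_of_hasDerivAt_of_integrableOn_Ioi (fun u _ => hderiv u) hderiv_int hprimitive)
  rw [integral_add (hI₀.const_mul _) (hI₂.const_mul _), integral_const_mul,
    integral_const_mul] at hFTC
  simp only [mul_zero, sinh_zero, zero_mul, add_zero, sub_zero] at hFTC
  rw [coshMoment, coshMoment]
  linarith

lemma integrableOn_rpow_mul_exp_neg_mul_cosh {a : ℝ} (ha : -1 < a) (ν u : ℝ) :
    IntegrableOn (fun t => t ^ a * (exp (-t * cosh u) * cosh (ν * u))) (Ioi 0) := by
  have : IntegrableOn (fun t => t ^ a * exp (-cosh u * t ^ (1 : ℝ)) * cosh (ν * u)) (Ioi 0) :=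
    (integrableOn_rpow_mul_exp_neg_mul_rpow ha one_pos (cosh_pos u)).mul_const _
  refine this.congr_fun (fun t _ => ?_) measurableSet_Ioi
  simp only [rpow_one]; ring_nf

lemma integral_rpow_mul_exp_neg_mul_cosh {a : ℝ} (ha : -1 < a) (ν u : ℝ) :
    ∫ t in Ioi 0, t ^ a * (exp (-t * cosh u) * cosh (ν * u))
      = Gamma (a + 1) * (cosh (ν * u) * cosh u ^ (-(a + 1))) := by
  have hc : 0 < cosh u := cosh_pos u
  calc _ = (∫ t in Ioi 0, t ^ (a + 1 - 1) * exp (-(cosh u * t))) * cosh (ν * u) := by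
        rw [← integral_mul_const, add_sub_cancel_right]
        congr 1 with t
        rw [neg_mul, mul_comm (cosh u) t]
        ring
    _ = _ := by
        rw [integral_rpow_mul_exp_neg_mul_Ioi (by linarith) hc, one_div, inv_rpow hc.le,
          ← rpow_neg hc.le]
        ring

lemma integrable_rpow_mul_besselK_integrand {ν a : ℝ} (h : |ν| < a + 1) :
    Integrable (fun p : ℝ × ℝ => p.1 ^ a * (exp (-p.1 * cosh p.2) * cosh (ν * p.2)))
      ((volume.restrict (Ioi 0)).prod (volume.restrict (Ioi 0))) := by
  have ha : -1 < a := by linarith [abs_nonneg ν]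
  refine (integrable_prod_iff' (by fun_prop)).2
    ⟨Eventually.of_forall fun u => integrableOn_rpow_mul_exp_neg_mul_cosh ha ν u, ?_⟩
  refine ((integrableOn_cosh_mul_mul_cosh_rpow_neg h).const_mul (Gamma (a + 1))).congr ?_
  refine Eventually.of_forall fun u => ?_
  dsimp only
  rw [← integral_rpow_mul_exp_neg_mul_cosh ha]
  refine setIntegral_congr_fun measurableSet_Ioi fun t (ht : 0 < t) => ?_
  exact (norm_of_nonneg (by positivity)).symm

lemma integrableOn_rpow_mul_besselK {ν a : ℝ} (h : |ν| < a + 1) :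
    IntegrableOn (fun t => t ^ a * besselK ν t) (Ioi 0) := by
  have := (integrable_rpow_mul_besselK_integrand h).integral_prod_left
  simp only [integral_const_mul] at this
  exact this

lemma integral_rpow_mul_besselK {ν a : ℝ} (h : |ν| < a + 1) :
    ∫ t in Ioi 0, t ^ a * besselK ν t = Gamma (a + 1) * coshMoment ν (a + 1) := by
  have ha : -1 < a := by linarith [abs_nonneg ν]
  simp only [besselK, ← integral_const_mul]
  rw [integral_integral_swap (integrable_rpow_mul_besselK_integrand h), coshMoment,
    ← integral_const_mul]
  simp only [integral_rpow_mul_exp_neg_mul_cosh ha]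

lemma integral_rpow_add_two_mul_besselK {ν a : ℝ} (h : |ν| < a + 1) :
    ∫ t in Ioi 0, t ^ (a + 2) * besselK ν t
      = ((a + 1) ^ 2 - ν ^ 2) * ∫ t in Ioi 0, t ^ a * besselK ν t := by
  have ha : 0 < a + 1 := (abs_nonneg ν).trans_lt h
  have hΓ : Gamma (a + 2 + 1) = (a + 2) * ((a + 1) * Gamma (a + 1)) := by
    rw [Gamma_add_one (by linarith), show a + 2 = a + 1 + 1 by ring, Gamma_add_one ha.ne']
  rw [integral_rpow_mul_besselK h, integral_rpow_mul_besselK (by linarith), hΓ,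
    show a + 2 + 1 = a + 1 + 2 by ring]
  linear_combination Gamma (a + 1) * coshMoment_add_two h

lemma integral_half_rpow_mul_besselK_sqrt (κ ν : ℝ) (g : ℝ → ℝ) :
    ∫ x in Ioi 0, 1 / 2 * x ^ ((κ - 1) / 2) * besselK ν (√x) * g x
      = ∫ t in Ioi 0, t ^ κ * besselK ν t * g (t ^ 2) := by
  rw [← integral_comp_rpow_Ioi_of_pos two_pos]
  refine setIntegral_congr_fun measurableSet_Ioi fun t (ht : 0 < t) => ?_
  rw [← rpow_mul ht.le, show (2 : ℝ) * ((κ - 1) / 2) = κ - 1 by ring,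
    show (2 : ℝ) - 1 = 1 by norm_num, rpow_one, rpow_two, sqrt_sq ht.le, smul_eq_mul,
    rpow_sub_one ht.ne']
  field_simp

lemma integral_half_rpow_mul_besselK_sqrt_mul_sub {κ ν : ℝ} (h : |ν| < κ + 1) :
    ∫ x in Ioi 0, 1 / 2 * x ^ ((κ - 1) / 2) * besselK ν (√x) * (x - ((κ + 1) ^ 2 - ν ^ 2))
      = 0 := by
  rw [integral_half_rpow_mul_besselK_sqrt κ ν (fun x => x - ((κ + 1) ^ 2 - ν ^ 2))]
  have hsplit : ∀ t ∈ Ioi (0 : ℝ), t ^ κ * besselK ν t * (t ^ 2 - ((κ + 1) ^ 2 - ν ^ 2))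
      = t ^ (κ + 2) * besselK ν t - ((κ + 1) ^ 2 - ν ^ 2) * (t ^ κ * besselK ν t) := by
    intro t (ht : 0 < t)
    rw [rpow_add ht, rpow_two]
    ring
  rw [setIntegral_congr_fun measurableSet_Ioi hsplit,
    integral_sub (integrableOn_rpow_mul_besselK (by linarith))
      ((integrableOn_rpow_mul_besselK h).const_mul _),
    integral_const_mul, integral_rpow_add_two_mul_besselK h, sub_self]

theorem phi_one_weightW_general (μ ν : ℝ) (h1 : -1 < μ + ν) :
    ((∃ m : ℕ, μ - ν = 2 * m) →
      ∫ x in Set.Ioi (0:ℝ), weightW μ ν x * (x - ((μ + 1)^2 - ν^2)) = 0) ∧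
    ((∃ m : ℕ, μ - ν = 2 * m + 1) →
      ∫ x in Set.Ioi (0:ℝ), weightW μ ν x * (x - ((μ + 2)^2 - ν^2)) = 0) := by
  constructor
  · rintro ⟨m, hm⟩
    have heven : ∃ k : ℤ, μ - ν = 2 * k := ⟨m, mod_cast hm⟩
    simp only [weightW, if_pos heven]
    exact integral_half_rpow_mul_besselK_sqrt_mul_sub
      (abs_lt.2 ⟨by linarith, by linarith [m.cast_nonneg (α := ℝ)]⟩)
  · rintro ⟨m, hm⟩
    have hodd : ¬ ∃ k : ℤ, μ - ν = 2 * k := by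
      rintro ⟨k, hk⟩
      have : (2 * k : ℤ) = 2 * m + 1 := by exact_mod_cast hk.symm.trans hm
      omega
    simp only [weightW, if_neg hodd]
    have := integral_half_rpow_mul_besselK_sqrt_mul_sub (κ := μ + 1) (ν := ν)
      (abs_lt.2 ⟨by linarith, by linarith [m.cast_nonneg (α := ℝ)]⟩)
    rwa [add_sub_cancel_right, add_assoc, one_add_one_eq_two] at this

/-- the monic degree-one orthogonal polynomial for `w_{μ,ν}`. -/
theorem phi_one_weightW (μ ν : ℝ) (h1 : -1 < μ + ν) (hint : ∃ m : ℕ, μ - ν = m) :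
    ((∃ m : ℕ, μ - ν = 2 * m) →
      ∫ x in Set.Ioi (0:ℝ), weightW μ ν x * (x - ((μ + 1)^2 - ν^2)) = 0) ∧
    ((∃ m : ℕ, μ - ν = 2 * m + 1) →
      ∫ x in Set.Ioi (0:ℝ), weightW μ ν x * (x - ((μ + 2)^2 - ν^2)) = 0) :=
  phi_one_weightW_general μ ν h1

end
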